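/- Let H be an n-dimensional complex Hilbert space and g ∈ Λ²H a unit vector with canonical form g = ∑_{i=1}^s ξ_i √2 φ_{2i-1} ∧ φ_{2i} where {φ_i} is an orthonormal basis of H and ∑|ξ_i|² = 1. Then for every k with 1 ≤ k ≤ s, the vector g ∧ φ_{2k-1} ∈ Λ³H has norm satisfying 3·‖g ∧ φ_{2k-1}‖² = 1 - |ξ_k|². -/

import Mathlib

noncomputable section
open scoped BigOperators ComplexConjugate InnerProductSpace

/-- The 1-particle space. -/
abbrev HS (n : ℕ) := EuclideanSpace ℂ (Fin n)
/-- Model for H^{⊗2}; Λ²H sits inside as the antisymmetric tensors. -/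
abbrev Sq (n : ℕ) := EuclideanSpace ℂ (Fin 2 → Fin n)
/-- Model for H^{⊗3}; Λ³H sits inside as the antisymmetric tensors. -/
abbrev Cube (n : ℕ) := EuclideanSpace ℂ (Fin 3 → Fin n)

/-- 2-particle wedge with convention ⟨u₁∧u₂, v₁∧v₂⟩ = (1/2!)det(⟨uᵢ,vⱼ⟩). -/
def wedge2 (n : ℕ) (u v : HS n) : Sq n :=
  WithLp.toLp 2 (fun x => (2 : ℂ)⁻¹ * (u (x 0) * v (x 1) - u (x 1) * v (x 0)))

/-- The 3-particle antisymmetrizer A³ on H^{⊗3}. -/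
def alt3 (n : ℕ) : Cube n →ₗ[ℂ] Cube n where
  toFun T := WithLp.toLp 2 (fun x => (6 : ℂ)⁻¹ *
    ∑ σ : Equiv.Perm (Fin 3), ((Equiv.Perm.sign σ : ℤ) : ℂ) * T (x ∘ σ))
  map_add' T S := by
    ext x
    simp [PiLp.add_apply, mul_add, Finset.sum_add_distrib]
  map_smul' c T := by
    ext x
    simp [PiLp.smul_apply, Finset.mul_sum, smul_eq_mul]
    congr 1
    ext σ
    ring

/-- 3-particle wedge with convention ⟨u₁∧u₂∧u₃, v₁∧v₂∧v₃⟩ = (1/3!)det(⟨uᵢ,vⱼ⟩). -/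
def wedge3 (n : ℕ) (u v w : HS n) : Cube n :=
  WithLp.toLp 2 (fun x => (6 : ℂ)⁻¹ * ∑ σ : Equiv.Perm (Fin 3),
    ((Equiv.Perm.sign σ : ℤ) : ℂ) * (u (x (σ 0)) * v (x (σ 1)) * w (x (σ 2))))

/-- Wedge of a 2-particle function with a 1-particle function: g ∧ φ = A³(g ⊗ φ). -/
def wedgeSV (n : ℕ) (g : Sq n) (v : HS n) : Cube n :=
  alt3 n (WithLp.toLp 2 (fun x => g ![x 0, x 1] * v (x 2)))

/-- P²_g ⊗ I¹ acting on H^{⊗3}. -/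
def pgI (n : ℕ) (g : Sq n) : Cube n →ₗ[ℂ] Cube n where
  toFun T := WithLp.toLp 2 (fun x => g ![x 0, x 1] *
    ∑ y : Fin 2 → Fin n, conj (g y) * T ![y 0, y 1, x 2])
  map_add' T S := by
    ext x
    simp [PiLp.add_apply, mul_add, Finset.sum_add_distrib]
  map_smul' c T := by
    ext x
    simp [PiLp.smul_apply, Finset.mul_sum, smul_eq_mul]
    congr 1
    ext y
    ring

/-- The operator 3P²_g ∧ I¹ = 3A³(P²_g ⊗ I¹)A³ (as an operator on H^{⊗3}; it
vanishes on the orthogonal complement of Λ³H and restricts to Λ³H). -/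
def T3 (n : ℕ) (g : Sq n) : Cube n →ₗ[ℂ] Cube n :=
  (3 : ℂ) • (alt3 n ∘ₗ pgI n g ∘ₗ alt3 n)

namespace Stmt6Aux
open Equiv

def q1 : Perm (Fin 3) := swap 0 1
def q2 : Perm (Fin 3) := swap 0 2
def q3 : Perm (Fin 3) := swap 1 2
def q4 : Perm (Fin 3) := swap 0 1 * swap 1 2
def q5 : Perm (Fin 3) := swap 1 2 * swap 0 1

lemma sum_perm3 (f : Perm (Fin 3) → ℂ) :
    ∑ σ : Perm (Fin 3), f σ = f 1 + f q1 + f q2 + f q3 + f q4 + f q5 := by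
  have h : (Finset.univ : Finset (Perm (Fin 3))) = {1, q1, q2, q3, q4, q5} := by decide
  rw [h, Finset.sum_insert (by decide), Finset.sum_insert (by decide),
    Finset.sum_insert (by decide), Finset.sum_insert (by decide),
    Finset.sum_insert (by decide), Finset.sum_singleton]
  ring

lemma q1_0 : q1 0 = 1 := by decide
lemma q1_1 : q1 1 = 0 := by decide
lemma q1_2 : q1 2 = 2 := by decide
lemma q2_0 : q2 0 = 2 := by decide
lemma q2_1 : q2 1 = 1 := by decide
lemma q2_2 : q2 2 = 0 := by decide
lemma q3_0 : q3 0 = 0 := by decide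
lemma q3_1 : q3 1 = 2 := by decide
lemma q3_2 : q3 2 = 1 := by decide
lemma q4_0 : q4 0 = 1 := by decide
lemma q4_1 : q4 1 = 2 := by decide
lemma q4_2 : q4 2 = 0 := by decide
lemma q5_0 : q5 0 = 2 := by decide
lemma q5_1 : q5 1 = 0 := by decide
lemma q5_2 : q5 2 = 1 := by decide
lemma one_app : ∀ y : Fin 3, (1 : Perm (Fin 3)) y = y := fun _ => rfl
lemma sgn_one : ((Perm.sign (1 : Perm (Fin 3)) : ℤ) : ℂ) = 1 := by
  rw [show Perm.sign (1 : Perm (Fin 3)) = 1 from by decide]; norm_num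
lemma sgn_q1 : ((Perm.sign q1 : ℤ) : ℂ) = -1 := by
  rw [show Perm.sign q1 = -1 from by decide]; norm_num
lemma sgn_q2 : ((Perm.sign q2 : ℤ) : ℂ) = -1 := by
  rw [show Perm.sign q2 = -1 from by decide]; norm_num
lemma sgn_q3 : ((Perm.sign q3 : ℤ) : ℂ) = -1 := by
  rw [show Perm.sign q3 = -1 from by decide]; norm_num
lemma sgn_q4 : ((Perm.sign q4 : ℤ) : ℂ) = 1 := by
  rw [show Perm.sign q4 = 1 from by decide]; norm_num
lemma sgn_q5 : ((Perm.sign q5 : ℤ) : ℂ) = 1 := by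
  rw [show Perm.sign q5 = 1 from by decide]; norm_num

lemma triple_factor {n : ℕ} (f g h : Fin n → ℂ) :
    ∑ α, ∑ β, ∑ γ, f α * (g β * h γ) = (∑ α, f α) * ((∑ α, g α) * (∑ α, h α)) := by
  simp only [← Finset.mul_sum, ← Finset.sum_mul]

def pi3Equiv (n : ℕ) : (Fin n × Fin n × Fin n) ≃ (Fin 3 → Fin n) where
  toFun p := ![p.1, p.2.1, p.2.2]
  invFun x := (x 0, x 1, x 2)
  left_inv p := by simp
  right_inv x := by funext j; fin_cases j <;> simp

lemma sum_pi3 (n : ℕ) (f : (Fin 3 → Fin n) → ℂ) :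
    ∑ x : Fin 3 → Fin n, f x = ∑ a, ∑ b, ∑ c, f ![a, b, c] := by
  rw [← Equiv.sum_comp (pi3Equiv n) f, Fintype.sum_prod_type]
  simp [pi3Equiv, Fintype.sum_prod_type]

/-- elementary tensor -/
def t3 (n : ℕ) (u v w : HS n) : Cube n := WithLp.toLp 2 (fun x => u (x 0) * v (x 1) * w (x 2))

lemma wedge3_apply (n : ℕ) (u v w : HS n) (x : Fin 3 → Fin n) :
    wedge3 n u v w x = (6 : ℂ)⁻¹ *
      (u (x 0) * v (x 1) * w (x 2) - u (x 1) * v (x 0) * w (x 2)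
        - u (x 2) * v (x 1) * w (x 0) - u (x 0) * v (x 2) * w (x 1)
        + u (x 1) * v (x 2) * w (x 0) + u (x 2) * v (x 0) * w (x 1)) := by
  show (6 : ℂ)⁻¹ * ∑ σ : Perm (Fin 3),
      ((Perm.sign σ : ℤ) : ℂ) * (u (x (σ 0)) * v (x (σ 1)) * w (x (σ 2))) = _
  rw [sum_perm3 (fun σ => ((Perm.sign σ : ℤ) : ℂ) * (u (x (σ 0)) * v (x (σ 1)) * w (x (σ 2))))]
  rw [one_app, one_app, one_app, q1_0, q1_1, q1_2, q2_0, q2_1, q2_2, q3_0, q3_1, q3_2,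
    q4_0, q4_1, q4_2, q5_0, q5_1, q5_2, sgn_one, sgn_q1, sgn_q2, sgn_q3, sgn_q4, sgn_q5]
  ring

lemma wedge3_eq (n : ℕ) (u v w : HS n) :
    wedge3 n u v w = (6 : ℂ)⁻¹ •
      (t3 n u v w - t3 n v u w - t3 n w v u - t3 n u w v + t3 n v w u + t3 n w u v) := by
  ext x
  rw [wedge3_apply]
  show _ = (6 : ℂ)⁻¹ * (u (x 0) * v (x 1) * w (x 2) - v (x 0) * u (x 1) * w (x 2)
    - w (x 0) * v (x 1) * u (x 2) - u (x 0) * w (x 1) * v (x 2)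
    + v (x 0) * w (x 1) * u (x 2) + w (x 0) * u (x 1) * v (x 2))
  ring

lemma wedge2_apply (n : ℕ) (u v : HS n) (a b : Fin n) :
    wedge2 n u v ![a, b] = (2 : ℂ)⁻¹ * (u a * v b - u b * v a) := rfl

lemma wedgeSV_apply (n : ℕ) (g : Sq n) (v : HS n) (x : Fin 3 → Fin n) :
    wedgeSV n g v x = (6 : ℂ)⁻¹ * ∑ σ : Perm (Fin 3),
      ((Perm.sign σ : ℤ) : ℂ) * (g ![x (σ 0), x (σ 1)] * v (x (σ 2))) := rfl

lemma wedgeSV_wedge2 (n : ℕ) (u v w : HS n) :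
    wedgeSV n (wedge2 n u v) w = wedge3 n u v w := by
  ext x
  rw [wedgeSV_apply, wedge3_apply]
  rw [sum_perm3 (fun σ => ((Perm.sign σ : ℤ) : ℂ)
    * (wedge2 n u v ![x (σ 0), x (σ 1)] * w (x (σ 2))))]
  rw [one_app, one_app, one_app, q1_0, q1_1, q1_2, q2_0, q2_1, q2_2, q3_0, q3_1, q3_2,
    q4_0, q4_1, q4_2, q5_0, q5_1, q5_2, sgn_one, sgn_q1, sgn_q2, sgn_q3, sgn_q4, sgn_q5]
  rw [wedge2_apply, wedge2_apply, wedge2_apply, wedge2_apply, wedge2_apply, wedge2_apply]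
  ring

lemma t3_apply (n : ℕ) (u v w : HS n) (a b c : Fin n) :
    t3 n u v w ![a, b, c] = u a * v b * w c := rfl

lemma t3_inner {n : ℕ} {φ : Fin n → HS n} (hφ : Orthonormal ℂ φ) (a b c d e f : Fin n) :
    ⟪(t3 n (φ a) (φ b) (φ c) : Cube n), t3 n (φ d) (φ e) (φ f)⟫_ℂ =
      (if a = d then 1 else 0) * ((if b = e then 1 else 0) * (if c = f then 1 else 0)) := by
  have hδ : ∀ p q : Fin n, (∑ t, conj (φ p t) * φ q t) = if p = q then (1 : ℂ) else 0 := by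
    intro p q
    have h := (orthonormal_iff_ite.mp hφ) p q
    simp only [PiLp.inner_apply, RCLike.inner_apply'] at h; exact h
  calc ⟪(t3 n (φ a) (φ b) (φ c) : Cube n), t3 n (φ d) (φ e) (φ f)⟫_ℂ
      = ∑ x : Fin 3 → Fin n, conj ((t3 n (φ a) (φ b) (φ c) : Cube n) x)
          * (t3 n (φ d) (φ e) (φ f) : Cube n) x := by
        rw [PiLp.inner_apply]; simp only [RCLike.inner_apply']
    _ = ∑ α, ∑ β, ∑ γ, conj (φ a α * φ b β * φ c γ) * (φ d α * φ e β * φ f γ) := by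
        rw [sum_pi3 n]; rfl
    _ = ∑ α, ∑ β, ∑ γ, (conj (φ a α) * φ d α)
          * ((conj (φ b β) * φ e β) * (conj (φ c γ) * φ f γ)) := by
        refine Finset.sum_congr rfl fun α _ => Finset.sum_congr rfl fun β _ =>
          Finset.sum_congr rfl fun γ _ => ?_
        rw [map_mul, map_mul]
        ring
    _ = (∑ α, conj (φ a α) * φ d α) * ((∑ β, conj (φ b β) * φ e β)
          * (∑ γ, conj (φ c γ) * φ f γ)) := triple_factor _ _ _
    _ = _ := by rw [hδ, hδ, hδ]

lemma wedgeSV_zero (n : ℕ) (v : HS n) : wedgeSV n 0 v = 0 := by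
  unfold wedgeSV
  have h : (WithLp.toLp 2 (fun x => (0 : Sq n) ![x 0, x 1] * v (x 2)) : Cube n) = 0 := by
    ext x
    show (0 : ℂ) * v (x 2) = 0
    rw [zero_mul]
  rw [h, map_zero]

lemma wedgeSV_add (n : ℕ) (g₁ g₂ : Sq n) (v : HS n) :
    wedgeSV n (g₁ + g₂) v = wedgeSV n g₁ v + wedgeSV n g₂ v := by
  unfold wedgeSV
  rw [← map_add]
  congr 1
  ext x
  show (g₁ ![x 0, x 1] + g₂ ![x 0, x 1]) * v (x 2)
    = g₁ ![x 0, x 1] * v (x 2) + g₂ ![x 0, x 1] * v (x 2)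
  ring

lemma wedgeSV_smul (n : ℕ) (c : ℂ) (g : Sq n) (v : HS n) :
    wedgeSV n (c • g) v = c • wedgeSV n g v := by
  unfold wedgeSV
  rw [← map_smul]
  congr 1
  ext x
  show c * g ![x 0, x 1] * v (x 2) = c * (g ![x 0, x 1] * v (x 2))
  ring

lemma wedgeSV_sum (n : ℕ) {ι : Type*} (s : Finset ι) (G : ι → Sq n) (v : HS n) :
    wedgeSV n (∑ i ∈ s, G i) v = ∑ i ∈ s, wedgeSV n (G i) v := by
  classical
  induction s using Finset.cons_induction with
  | empty => simpa using wedgeSV_zero n v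
  | cons a s ha ih => rw [Finset.sum_cons, Finset.sum_cons, wedgeSV_add, ih]


end Stmt6Aux

open Stmt6Aux in
/-- Theorem 1 eigenfunction norms: 3‖g ∧ φ_{2k-1}‖² = 1 - |ξ_k|². -/
theorem stmt6 (n s : ℕ) (hsn : 2 * s ≤ n) (φ : Fin n → HS n)
    (hφ : Orthonormal ℂ φ) (ξ : Fin s → ℂ) (hξ : ∑ i, ‖ξ i‖ ^ 2 = 1)
    (k : Fin s) :
    let g : Sq n := ∑ i : Fin s, ξ i • ((Real.sqrt 2 : ℂ) •
      wedge2 n (φ ⟨2 * (i : ℕ), by have := i.isLt; omega⟩)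
        (φ ⟨2 * (i : ℕ) + 1, by have := i.isLt; omega⟩));
    3 * ‖wedgeSV n g (φ ⟨2 * (k : ℕ), by have := k.isLt; omega⟩)‖ ^ 2
      = 1 - ‖ξ k‖ ^ 2 := by
  intro g
  classical
  set C : ℂ := ((Real.sqrt 2 : ℝ) : ℂ) with hC
  set W : Fin s → Cube n := fun i =>
    wedge3 n (φ ⟨2 * (i : ℕ), by have := i.isLt; omega⟩)
      (φ ⟨2 * (i : ℕ) + 1, by have := i.isLt; omega⟩)
      (φ ⟨2 * (k : ℕ), by have := k.isLt; omega⟩) with hWdef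
  set X : Cube n := wedgeSV n g (φ ⟨2 * (k : ℕ), by have := k.isLt; omega⟩) with hXdef
  have hX : X = ∑ i : Fin s, (ξ i * C) • W i := by
    rw [hXdef, show g = ∑ i : Fin s, ξ i • ((Real.sqrt 2 : ℂ) •
      wedge2 n (φ ⟨2 * (i : ℕ), by have := i.isLt; omega⟩)
        (φ ⟨2 * (i : ℕ) + 1, by have := i.isLt; omega⟩)) from rfl, wedgeSV_sum]
    refine Finset.sum_congr rfl fun i _ => ?_
    rw [wedgeSV_smul, wedgeSV_smul, wedgeSV_wedge2, smul_smul]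
  have hW : ∀ i j : Fin s, ⟪W i, W j⟫_ℂ
      = if i = j then (if i = k then 0 else (6 : ℂ)⁻¹) else 0 := by
    intro i j
    rw [hWdef]
    simp only
    rw [wedge3_eq, wedge3_eq]
    simp only [inner_smul_left, inner_smul_right, inner_sub_left, inner_sub_right,
      inner_add_left, inner_add_right, t3_inner hφ, Fin.mk.injEq, map_inv₀]
    rcases eq_or_ne i j with rfl | hij
    · rcases eq_or_ne i k with rfl | hik
      · have h1 : ¬(2 * (i : ℕ) = 2 * (i : ℕ) + 1) := by omega
        have h2 : ¬(2 * (i : ℕ) + 1 = 2 * (i : ℕ)) := by omega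
        simp [h1, h2]
      · have hik' : (i : ℕ) ≠ (k : ℕ) := fun h => hik (Fin.ext h)
        have h1 : ¬(2 * (i : ℕ) = 2 * (i : ℕ) + 1) := by omega
        have h2 : ¬(2 * (i : ℕ) + 1 = 2 * (i : ℕ)) := by omega
        have h3 : ¬(2 * (i : ℕ) = 2 * (k : ℕ)) := by omega
        have h4 : ¬(2 * (k : ℕ) = 2 * (i : ℕ)) := by omega
        have h5 : ¬(2 * (i : ℕ) + 1 = 2 * (k : ℕ)) := by omega
        have h6 : ¬(2 * (k : ℕ) = 2 * (i : ℕ) + 1) := by omega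
        simp [h1, h2, h3, h4, h5, h6, hik, map_ofNat]
        norm_num [map_ofNat]
    · have hij' : (i : ℕ) ≠ (j : ℕ) := fun h => hij (Fin.ext h)
      have h1 : ¬(2 * (i : ℕ) = 2 * (j : ℕ)) := by omega
      have h2 : ¬(2 * (i : ℕ) = 2 * (j : ℕ) + 1) := by omega
      have h3 : ¬(2 * (i : ℕ) + 1 = 2 * (j : ℕ)) := by omega
      have h4 : ¬(2 * (i : ℕ) + 1 = 2 * (j : ℕ) + 1) := by omega
      simp [h1, h2, h3, h4, hij]
  have hCC : conj C * C = 2 := by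
    rw [hC, Complex.conj_ofReal, ← Complex.ofReal_mul,
      Real.mul_self_sqrt (by norm_num : (0:ℝ) ≤ 2)]
    norm_num
  have hXX : ⟪X, X⟫_ℂ = ((1 - ‖ξ k‖ ^ 2 : ℝ) : ℂ) / 3 := by
    rw [hX, sum_inner]
    have h1 : ∀ i : Fin s, ⟪(ξ i * C) • W i, ∑ j : Fin s, (ξ j * C) • W j⟫_ℂ
        = conj (ξ i * C) * ((ξ i * C) * (if i = k then 0 else (6 : ℂ)⁻¹)) := by
      intro i
      rw [inner_sum]
      have hz : ∀ j : Fin s, j ≠ i → ⟪(ξ i * C) • W i, (ξ j * C) • W j⟫_ℂ = 0 := by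
        intro j hji
        rw [inner_smul_left, inner_smul_right, hW i j,
          if_neg (fun h => hji h.symm), mul_zero, mul_zero]
      rw [Fintype.sum_eq_single i hz, inner_smul_left, inner_smul_right, hW i i, if_pos rfl]
    rw [Finset.sum_congr rfl fun i _ => h1 i]
    have h2 : ∀ i : Fin s, conj (ξ i * C) * ((ξ i * C) * (if i = k then 0 else (6 : ℂ)⁻¹))
        = ((‖ξ i‖ ^ 2 : ℝ) : ℂ) * 3⁻¹ - (if i = k then ((‖ξ i‖ ^ 2 : ℝ) : ℂ) * 3⁻¹ else 0) := by
      intro i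
      have hxi : conj (ξ i) * ξ i = ((‖ξ i‖ ^ 2 : ℝ) : ℂ) := by
        rw [mul_comm, Complex.mul_conj, Complex.normSq_eq_norm_sq]
      rcases eq_or_ne i k with rfl | h
      · simp
      · rw [if_neg h, if_neg h, sub_zero]
        calc conj (ξ i * C) * ((ξ i * C) * (6 : ℂ)⁻¹)
            = (conj (ξ i) * ξ i) * ((conj C * C) * 6⁻¹) := by rw [map_mul]; ring
          _ = ((‖ξ i‖ ^ 2 : ℝ) : ℂ) * 3⁻¹ := by rw [hxi, hCC]; ring
    rw [Finset.sum_congr rfl fun i _ => h2 i, Finset.sum_sub_distrib,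
      Finset.sum_ite_eq' Finset.univ k]
    rw [if_pos (Finset.mem_univ k), ← Finset.sum_mul]
    have : ∑ i : Fin s, ((‖ξ i‖ ^ 2 : ℝ) : ℂ) = 1 := by
      rw [← Complex.ofReal_sum]
      rw [hξ]
      norm_num
    rw [this]
    push_cast
    ring
  have hnorm := inner_self_eq_norm_sq (𝕜 := ℂ) (x := X)
  rw [hXX] at hnorm
  have hcast : ((1 - ‖ξ k‖ ^ 2 : ℝ) : ℂ) / 3 = (((1 - ‖ξ k‖ ^ 2) / 3 : ℝ) : ℂ) := by
    push_cast; ring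
  rw [hcast, RCLike.re_to_complex, Complex.ofReal_re] at hnorm
  linarith [hnorm]


end
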